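/- arXiv:2004.03050 — 2 statements merged into one kernel-verified Lean document; each statement's English description precedes it below -/
import Mathlib

section
/- For every nonempty A ⊆ S, every B ⊆ S, and every integer l ≥ 0, there exists A' ⊆ A with |A'| ≤ l such that Δ(A'|B) ≥ (min(l, |A|)/|A|) · Δ(A|B); equivalently, Δ^l(A|B) ≥ min(l/|A|, 1) · Δ(A|B). -/
open Finset

variable {α : Type*}

/-- `f` is monotone on finsets. -/
def IsMonotoneFn (f : Finset α → ℝ) : Prop := ∀ A B : Finset α, A ⊆ B → f A ≤ f B

/-- `f` is submodular. -/
def IsSubmodularFn [DecidableEq α] (f : Finset α → ℝ) : Prop :=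
  ∀ A B : Finset α, A ⊆ B → ∀ s ∉ B, f (insert s A) - f A ≥ f (insert s B) - f B

/-- Marginal contribution Δ(A|B) = f(A ∪ B) − f(B). -/
def marg [DecidableEq α] (f : Finset α → ℝ) (A B : Finset α) : ℝ := f (A ∪ B) - f B

section aux
variable [DecidableEq α] {f : Finset α → ℝ}

lemma marg_nonneg (hmono : IsMonotoneFn f) (C B : Finset α) : 0 ≤ marg f C B := by
  have := hmono B (C ∪ B) subset_union_right
  simp [marg]; linarith

lemma marg_single_mono (hmono : IsMonotoneFn f) (hsub : IsSubmodularFn f)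
    {B D : Finset α} (hBD : B ⊆ D) (b : α) : marg f {b} D ≤ marg f {b} B := by
  by_cases hb : b ∈ D
  · have : ({b} : Finset α) ∪ D = D := by
      rw [← insert_eq, insert_eq_self.mpr hb]
    rw [marg, this]
    have := marg_nonneg hmono {b} B
    linarith
  · have := hsub B D hBD b hb
    simp only [marg, ← insert_eq]
    linarith

lemma marg_subadd (hmono : IsMonotoneFn f) (hsub : IsSubmodularFn f)
    (A B : Finset α) : marg f A B ≤ ∑ b ∈ A, marg f {b} B := by
  induction A using Finset.induction_on with
  | empty => simp [marg]
  | @insert a A ha ih =>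
    have hid : marg f (insert a A) B = marg f {a} (A ∪ B) + marg f A B := by
      simp only [marg, insert_union, ← insert_eq]; ring
    have h2 : marg f {a} (A ∪ B) ≤ marg f {a} B :=
      marg_single_mono hmono hsub subset_union_right a
    rw [Finset.sum_insert ha]
    linarith

lemma marg_insert (a : α) (A' B : Finset α) :
    marg f (insert a A') B = marg f {a} B + marg f A' (insert a B) := by
  have : insert a A' ∪ B = A' ∪ insert a B := by
    rw [insert_union, union_insert]
  simp only [marg, this, ← insert_eq]; ring

lemma key (hmono : IsMonotoneFn f) (hsub : IsSubmodularFn f) :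
    ∀ n : ℕ, ∀ A B : Finset α, A.card = n → ∀ l : ℕ,
    ∃ A' ⊆ A, A'.card ≤ l ∧
      ((min l A.card : ℕ) : ℝ) * marg f A B ≤ (A.card : ℝ) * marg f A' B := by
  intro n
  induction n using Nat.strong_induction_on with
  | _ n ih =>
  intro A B hcard l
  rcases Nat.eq_zero_or_pos l with hl0 | hl1
  · refine ⟨∅, empty_subset _, by simp [hl0], ?_⟩
    subst hl0
    have h0 : marg f (∅ : Finset α) B = 0 := by simp [marg]
    simp [h0]
  rcases le_or_gt A.card l with hle | hlt
  · exact ⟨A, subset_rfl, hle, by rw [min_eq_right hle]⟩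
  -- l < A.card, 1 ≤ l
  have hA : A.Nonempty := card_pos.mp (lt_of_le_of_lt (Nat.zero_le l) hlt)
  obtain ⟨a, haA, hamax⟩ := Finset.exists_max_image A (fun b => marg f {b} B) hA
  set C := A.erase a with hC
  have hCcard : C.card = A.card - 1 := card_erase_of_mem haA
  have hn : A.card = n := hcard
  have hnpos : 0 < A.card := hA.card_pos
  obtain ⟨A'', hA''C, hA''card, hA''⟩ :=
    ih (A.card - 1) (by omega) C (insert a B) (by omega) (l - 1)
  have hmin : min (l - 1) C.card = l - 1 := by
    rw [min_eq_left]; omega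
  rw [hmin] at hA''
  -- identities
  have hCA : C ∪ insert a B = A ∪ B := by
    ext x
    simp only [mem_union, mem_insert, hC, mem_erase]
    constructor
    · rintro (⟨_, hx⟩ | rfl | hx) <;> tauto
    · rintro (hx | hx)
      · by_cases hxa : x = a <;> tauto
      · tauto
  have hCmarg : marg f C (insert a B) = marg f A B - marg f {a} B := by
    simp only [marg, hCA, ← insert_eq]; ring
  refine ⟨insert a A'', ?_, ?_, ?_⟩
  · exact insert_subset haA (hA''C.trans (erase_subset a A))
  · calc (insert a A'').card ≤ A''.card + 1 := card_insert_le a A''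
      _ ≤ l := by omega
  -- the inequality
  have hins := marg_insert (f := f) a A'' B
  have hsum : marg f A B ≤ ∑ b ∈ A, marg f {b} B := marg_subadd hmono hsub A B
  have hbound : ∑ b ∈ A, marg f {b} B ≤ A.card * marg f {a} B := by
    calc ∑ b ∈ A, marg f {b} B ≤ ∑ _b ∈ A, marg f {a} B :=
          Finset.sum_le_sum (fun b hb => hamax b hb)
      _ = A.card * marg f {a} B := by rw [Finset.sum_const, nsmul_eq_mul]
  have hmaxa : marg f A B ≤ A.card * marg f {a} B := le_trans hsum hbound
  have hCnn : 0 ≤ marg f C (insert a B) := marg_nonneg hmono C (insert a B)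
  have hann : 0 ≤ marg f {a} B := marg_nonneg hmono {a} B
  rw [hCmarg] at hA'' hCnn
  rw [min_eq_left hlt.le, hins]
  -- cast setup
  have hcards : ((A.card - 1 : ℕ) : ℝ) = (A.card : ℝ) - 1 := by
    rw [Nat.cast_sub hnpos]; norm_num
  have hlcast : ((l - 1 : ℕ) : ℝ) = (l : ℝ) - 1 := by
    rw [Nat.cast_sub hl1]; norm_num
  rw [hCcard, hcards, hlcast] at hA''
  have hltR : (l : ℝ) < A.card := by exact_mod_cast hlt
  have hl1R : (1 : ℝ) ≤ l := by exact_mod_cast hl1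
  nlinarith [mul_nonneg (sub_nonneg.mpr hltR.le) hann,
    mul_le_mul_of_nonneg_left hmaxa (sub_nonneg.mpr hltR.le)]

end aux

/-- Δ^l(A|B): best marginal of a subset of `A` of size at most `l`. -/
noncomputable def margSup [DecidableEq α] (f : Finset α → ℝ) (l : ℕ) (A B : Finset α) : ℝ :=
  (A.powerset.filter (fun C => C.card ≤ l)).sup' ⟨∅, by simp⟩ (fun C => marg f C B)

/-- Union of the first `i` sets: x_0 ∪ ⋯ ∪ x_{i-1}. -/
def pref [DecidableEq α] (x : ℕ → Finset α) (i : ℕ) : Finset α := (Finset.range i).biUnion x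

/-- A nominal greedy profile. -/
def NomGreedy [DecidableEq α] (f : Finset α → ℝ) (Ss : ℕ → Finset α) (k n : ℕ)
    (x : ℕ → Finset α) : Prop :=
  ∀ i < n, x i ⊆ Ss i ∧ (x i).card ≤ k ∧
    ∀ c : Finset α, c ⊆ Ss i → c.card ≤ k → f (c ∪ pref x i) ≤ f (x i ∪ pref x i)

/-- An augmented greedy profile. -/
def AugGreedy [DecidableEq α] (f : Finset α → ℝ) (Ss : ℕ → Finset α) (k m n : ℕ)
    (x z : ℕ → Finset α) : Prop :=
  ∀ i < n,
    (x i ⊆ Ss i ∪ pref z i ∧ (x i).card ≤ k ∧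
      ∀ c : Finset α, c ⊆ Ss i ∪ pref z i → c.card ≤ k →
        f (c ∪ pref x i) ≤ f (x i ∪ pref x i)) ∧
    ∃ zk zr : Finset α,
      z i = zk ∪ zr ∧ zk ⊆ Ss i ∧ zk.card ≤ min k m ∧
      (∀ w : Finset α, w ⊆ Ss i → w.card ≤ min k m →
        marg f w (pref x (i + 1)) ≤ marg f zk (pref x (i + 1))) ∧
      zr ⊆ Ss i ∧ zr.card ≤ m - k

/-- The optimal value OPT(f, (S_i), k) over feasible profiles with n agents. -/
noncomputable def OPTval [DecidableEq α] [Fintype α] (f : Finset α → ℝ) (Ss : ℕ → Finset α)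
    (n k : ℕ) : ℝ :=
  ((Finset.univ : Finset (Fin n → Finset α)).filter
      (fun y => ∀ i : Fin n, y i ⊆ Ss (i : ℕ) ∧ (y i).card ≤ k)).sup'
    ⟨(fun _ => ∅), by simp⟩ (fun y => f (Finset.univ.biUnion (fun i => y i)))

/-- Density bound: a subset of size at most `l` recovers a min(l/|A|, 1) fraction of the
marginal of `A` given `B`. -/
theorem stmt5 [DecidableEq α] [Fintype α] (f : Finset α → ℝ)
    (hnorm : f ∅ = 0) (hmono : IsMonotoneFn f) (hsub : IsSubmodularFn f)
    (A B : Finset α) (hA : A.Nonempty) (l : ℕ) :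
    (∃ A' ⊆ A, A'.card ≤ l ∧
      marg f A' B ≥ ((min l A.card : ℕ) : ℝ) / (A.card : ℝ) * marg f A B) ∧
    margSup f l A B ≥ min ((l : ℝ) / (A.card : ℝ)) 1 * marg f A B := by
  obtain ⟨A', hA'sub, hA'card, hkey⟩ := key hmono hsub A.card A B rfl l
  have hnpos : (0:ℝ) < A.card := by exact_mod_cast hA.card_pos
  have hineq : ((min l A.card : ℕ):ℝ)/(A.card:ℝ) * marg f A B ≤ marg f A' B := by
    rw [div_mul_eq_mul_div, div_le_iff₀ hnpos]
    linarith
  refine ⟨⟨A', hA'sub, hA'card, hineq⟩, ?_⟩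
  have hmem : A' ∈ A.powerset.filter (fun C => C.card ≤ l) := by
    simp [Finset.mem_filter, Finset.mem_powerset, hA'sub, hA'card]
  have hle : marg f A' B ≤ margSup f l A B := by
    unfold margSup
    exact Finset.le_sup' (fun C => marg f C B) hmem
  have hco : min ((l:ℝ)/(A.card:ℝ)) 1 = ((min l A.card : ℕ):ℝ)/(A.card:ℝ) := by
    rw [Nat.cast_min, ← min_div_div_right hnpos.le, div_self hnpos.ne']
  rw [hco]
  linarith
end

section
/- Let n ≥ 2 and let x_1, …, x_n and y_1, …, y_n be subsets of S such that Δ(x_n | x_1 ∪ … ∪ x_{n−1}) ≥ Δ(y_n | x_1 ∪ … ∪ x_{n−1}). Then f(y_1 ∪ … ∪ y_n) ≤ f(x_1 ∪ … ∪ x_{n−1}) + Δ(x_n | x_1 ∪ … ∪ x_{n−1}) + ∑_{i=1}^{n−1} Δ(y_i | x_1 ∪ … ∪ x_i). -/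
open Finset

variable {α : Type*}

lemma pref_succ' [DecidableEq α] (x : ℕ → Finset α) (i : ℕ) :
    pref x (i+1) = x i ∪ pref x i := by
  simp [pref, Finset.range_add_one, Finset.union_comm]

lemma pref_mono' [DecidableEq α] (x : ℕ → Finset α) {i j : ℕ} (h : i ≤ j) :
    pref x i ⊆ pref x j :=
  Finset.biUnion_subset_biUnion_of_subset_left x (Finset.range_subset_range.mpr h)

lemma marg_anti' [DecidableEq α] (f : Finset α → ℝ) (hmono : IsMonotoneFn f)
    (hsub : IsSubmodularFn f) (A : Finset α) {B C : Finset α} (hBC : B ⊆ C) :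
    f (A ∪ C) - f C ≤ f (A ∪ B) - f B := by
  induction A using Finset.induction_on with
  | empty => simp
  | @insert a A ha ih =>
    by_cases hc : a ∈ A ∪ C
    · have h1 : insert a A ∪ C = A ∪ C := by
        rw [Finset.insert_union, Finset.insert_eq_self.mpr hc]
      have h2 : f (A ∪ B) ≤ f (insert a A ∪ B) :=
        hmono _ _ (Finset.union_subset_union_left (Finset.subset_insert a A))
      rw [h1]; linarith
    · have hkey := hsub (A ∪ B) (A ∪ C) (Finset.union_subset_union_right hBC) a hc
      rw [Finset.insert_union, Finset.insert_union]
      have e1 : insert a (A ∪ C) = insert a A ∪ C := (Finset.insert_union a A C).symm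
      have e2 : insert a (A ∪ B) = insert a A ∪ B := (Finset.insert_union a A B).symm
      linarith

/-- First chain of inequalities in the proof of Lemma 1. -/
theorem stmt7 [DecidableEq α] [Fintype α] (f : Finset α → ℝ)
    (hnorm : f ∅ = 0) (hmono : IsMonotoneFn f) (hsub : IsSubmodularFn f)
    (n : ℕ) (hn : 2 ≤ n) (x y : ℕ → Finset α)
    (h : marg f (x (n - 1)) (pref x (n - 1)) ≥ marg f (y (n - 1)) (pref x (n - 1))) :
    f (pref y n) ≤ f (pref x (n - 1)) + marg f (x (n - 1)) (pref x (n - 1)) +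
      ∑ i ∈ Finset.range (n - 1), marg f (y i) (pref x (i + 1)) := by
  obtain ⟨m, rfl⟩ : ∃ m, n = m + 1 := ⟨n - 1, (Nat.succ_pred_eq_of_pos (by omega)).symm⟩
  have hm : 1 ≤ m := by omega
  simp only [Nat.add_sub_cancel] at *
  set X := pref x m with hX
  have tel : f (X ∪ pref y (m+1)) =
      f X + ∑ i ∈ Finset.range (m+1), (f (X ∪ pref y (i+1)) - f (X ∪ pref y i)) := by
    rw [Finset.sum_range_sub (fun i => f (X ∪ pref y i))]
    have : pref y 0 = ∅ := by simp [pref]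
    rw [this, Finset.union_empty]; ring
  have hfy : f (pref y (m+1)) ≤ f (X ∪ pref y (m+1)) :=
    hmono _ _ (Finset.subset_union_right)
  rw [Finset.sum_range_succ] at tel
  have hlast : f (X ∪ pref y (m+1)) - f (X ∪ pref y m) ≤ marg f (x m) X := by
    have e : X ∪ pref y (m+1) = y m ∪ (X ∪ pref y m) := by
      rw [pref_succ']
      ac_rfl
    have h1 : f (y m ∪ (X ∪ pref y m)) - f (X ∪ pref y m) ≤ f (y m ∪ X) - f X :=
      marg_anti' f hmono hsub (y m) (Finset.subset_union_left)
    have h2 : marg f (y m) X ≤ marg f (x m) X := h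
    simp only [marg] at h2 ⊢
    rw [e]; linarith
  have hsum : ∑ i ∈ Finset.range m, (f (X ∪ pref y (i+1)) - f (X ∪ pref y i)) ≤
      ∑ i ∈ Finset.range m, marg f (y i) (pref x (i+1)) := by
    apply Finset.sum_le_sum
    intro i hi
    have hi' : i < m := Finset.mem_range.mp hi
    have e : X ∪ pref y (i+1) = y i ∪ (X ∪ pref y i) := by
      rw [pref_succ']; ac_rfl
    have hsubs : pref x (i+1) ⊆ X ∪ pref y i :=
      (pref_mono' x hi').trans Finset.subset_union_left
    have := marg_anti' f hmono hsub (y i) hsubs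
    simp only [marg]
    rw [e]; linarith
  linarith
end
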